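/- arXiv:1412.6491 — 2 statements merged into one kernel-verified Lean document; each statement's English description precedes it below -/
import Mathlib

section
/- In the setting of the state and adjoint maps q ↦ u_q and q ↦ p_q defined by the variational equalities a(u_q,v) = (g,v)_H − (q,γ₀v)_Q and a(p_q,v) = (u_q−z_d,v)_H for v ∈ V₀, the adjoint map is monotone in the following sense: −(γ₀(p_{q₂}) − γ₀(p_{q₁}), q₂ − q₁)_Q = ‖u_{q₂} − u_{q₁}‖_H² ≥ 0 for all q₁, q₂ ∈ Q. -/
open scoped RealInnerProductSpace

theorem stmt4
    {V H Q : Type*} [NormedAddCommGroup V] [InnerProductSpace ℝ V] [CompleteSpace V]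
    [NormedAddCommGroup H] [InnerProductSpace ℝ H] [CompleteSpace H]
    [NormedAddCommGroup Q] [InnerProductSpace ℝ Q] [CompleteSpace Q]
    (ι : V →L[ℝ] H) (V₀ : Submodule ℝ V) (hV₀ : IsClosed (V₀ : Set V))
    (a : V →L[ℝ] V →L[ℝ] ℝ) (hsymm : ∀ u v : V, a u v = a v u)
    (lam : ℝ) (hlam : 0 < lam) (hcoer : ∀ v ∈ V₀, lam * ‖v‖ ^ 2 ≤ a v v)
    (γ₀ : V →L[ℝ] Q) (g : H) (z_d : H) (b : V) (u : Q → V) (p : Q → V)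
    (hu : ∀ q : Q, u q - b ∈ V₀ ∧ ∀ v ∈ V₀, a (u q) v = ⟪g, ι v⟫ - ⟪q, γ₀ v⟫)
    (hp : ∀ q : Q, p q ∈ V₀ ∧ ∀ v ∈ V₀, a (p q) v = ⟪ι (u q) - z_d, ι v⟫) :
    ∀ q₁ q₂ : Q,
      -⟪γ₀ (p q₂) - γ₀ (p q₁), q₂ - q₁⟫ = ‖ι (u q₂) - ι (u q₁)‖ ^ 2 ∧
      (0 : ℝ) ≤ ‖ι (u q₂) - ι (u q₁)‖ ^ 2 := by
  intro q₁ q₂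
  refine ⟨?_, sq_nonneg _⟩
  -- w = u q₂ - u q₁ ∈ V₀
  have hw : u q₂ - u q₁ ∈ V₀ := by
    have := V₀.sub_mem (hu q₂).1 (hu q₁).1
    simpa using this
  have hr : p q₂ - p q₁ ∈ V₀ := V₀.sub_mem (hp q₂).1 (hp q₁).1
  -- a(w, r) = -⟪q₂-q₁, γ₀ r⟫
  have h1 : a (u q₂ - u q₁) (p q₂ - p q₁) =
      -⟪q₂ - q₁, γ₀ (p q₂ - p q₁)⟫ := by
    have h2 := (hu q₂).2 _ hr
    have h3 := (hu q₁).2 _ hr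
    have : a (u q₂ - u q₁) (p q₂ - p q₁)
        = a (u q₂) (p q₂ - p q₁) - a (u q₁) (p q₂ - p q₁) := by
      simp only [map_sub, ContinuousLinearMap.sub_apply]; ring
    rw [this, h2, h3, inner_sub_left]
    ring
  -- a(r, w) = ⟪ι w, ι w⟫
  have h4 : a (p q₂ - p q₁) (u q₂ - u q₁) =
      ⟪ι (u q₂) - ι (u q₁), ι (u q₂) - ι (u q₁)⟫ := by
    have h5 := (hp q₂).2 _ hw
    have h6 := (hp q₁).2 _ hw
    have : a (p q₂ - p q₁) (u q₂ - u q₁)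
        = a (p q₂) (u q₂ - u q₁) - a (p q₁) (u q₂ - u q₁) := by
      simp only [map_sub, ContinuousLinearMap.sub_apply]; ring
    rw [this, h5, h6, ← inner_sub_left, map_sub]
    congr 1
    abel
  have hsym := hsymm (u q₂ - u q₁) (p q₂ - p q₁)
  rw [h1, h4] at hsym
  have : ⟪γ₀ (p q₂) - γ₀ (p q₁), q₂ - q₁⟫ = ⟪q₂ - q₁, γ₀ (p q₂ - p q₁)⟫ := by
    rw [real_inner_comm]; simp [map_sub]
  rw [this, ← real_inner_self_eq_norm_sq, ← hsym]
end

section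
/- (Fixed-point error transfer) Suppose q_op = (1/M)γ₀(p_{q_op}) and q_{h,op} = (1/M)γ₀(p_{h,q_{h,op}}), that ‖p_{q} − p_{h,q}‖_V ≤ c₃ h^{r−1} uniformly near q_op, and that q ↦ p_{h,q} satisfies ‖p_{h,q₂} − p_{h,q₁}‖_V ≤ (‖γ₀‖/λ²)‖q₂ − q₁‖_Q. If M > ‖γ₀‖²/λ², then ‖q_{h,op} − q_op‖_Q ≤ [‖γ₀‖ c₃ / (M − ‖γ₀‖²/λ²)] · h^{r−1}. -/
open scoped RealInnerProductSpace

theorem stmt14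
    {V Q : Type*} [NormedAddCommGroup V] [InnerProductSpace ℝ V] [CompleteSpace V]
    [NormedAddCommGroup Q] [InnerProductSpace ℝ Q] [CompleteSpace Q]
    (M lam c₃ h r : ℝ) (hM : 0 < M) (hlam : 0 < lam) (hc₃ : 0 ≤ c₃)
    (hh : 0 < h) (hr : 1 < r)
    (γ₀ : V →L[ℝ] Q) (p p_h : Q → V) (q_op q_hop : Q)
    (hfix : q_op = (1 / M) • γ₀ (p q_op))
    (hfixh : q_hop = (1 / M) • γ₀ (p_h q_hop))
    (happrox : ∀ q : Q, ‖p q - p_h q‖ ≤ c₃ * h ^ (r - 1))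
    (hLip : ∀ q₁ q₂ : Q, ‖p_h q₂ - p_h q₁‖ ≤ (‖γ₀‖ / lam ^ 2) * ‖q₂ - q₁‖)
    (hMbig : M > ‖γ₀‖ ^ 2 / lam ^ 2) :
    ‖q_hop - q_op‖ ≤ (‖γ₀‖ * c₃ / (M - ‖γ₀‖ ^ 2 / lam ^ 2)) * h ^ (r - 1) := by
  set E := ‖q_hop - q_op‖ with hE
  set H := h ^ (r - 1) with hH
  have hMne : M ≠ 0 := hM.ne'
  have hfa : M • q_hop = γ₀ (p_h q_hop) := by
    conv_lhs => rw [hfixh]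
    rw [smul_smul, mul_one_div, div_self hMne, one_smul]
  have hfb : M • q_op = γ₀ (p q_op) := by
    conv_lhs => rw [hfix]
    rw [smul_smul, mul_one_div, div_self hMne, one_smul]
  have hdiff : M • (q_hop - q_op) = γ₀ (p_h q_hop) - γ₀ (p q_op) := by
    rw [smul_sub, hfa, hfb]
  have hME : M * E = ‖γ₀ (p_h q_hop) - γ₀ (p q_op)‖ := by
    rw [← hdiff, norm_smul, Real.norm_of_nonneg hM.le]
  have h1 : ‖γ₀ (p_h q_hop) - γ₀ (p q_op)‖ ≤ ‖γ₀‖ * ‖p_h q_hop - p q_op‖ := by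
    rw [← map_sub]; exact γ₀.le_opNorm _
  have h2 : ‖p_h q_hop - p q_op‖ ≤ ‖p_h q_hop - p_h q_op‖ + ‖p_h q_op - p q_op‖ :=
    norm_sub_le_norm_sub_add_norm_sub _ _ _
  have h3 : ‖p_h q_hop - p_h q_op‖ ≤ (‖γ₀‖ / lam ^ 2) * E := hLip q_op q_hop
  have h4 : ‖p_h q_op - p q_op‖ ≤ c₃ * H := by
    rw [norm_sub_rev]; exact happrox q_op
  have hγ : (0 : ℝ) ≤ ‖γ₀‖ := norm_nonneg _
  have key : M * E ≤ ‖γ₀‖ ^ 2 / lam ^ 2 * E + ‖γ₀‖ * c₃ * H := by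
    rw [hME]
    calc ‖γ₀ (p_h q_hop) - γ₀ (p q_op)‖
        ≤ ‖γ₀‖ * ((‖γ₀‖ / lam ^ 2) * E + c₃ * H) := by
          refine h1.trans ?_
          exact mul_le_mul_of_nonneg_left (h2.trans (add_le_add h3 h4)) hγ
      _ = ‖γ₀‖ ^ 2 / lam ^ 2 * E + ‖γ₀‖ * c₃ * H := by ring
  have hd : 0 < M - ‖γ₀‖ ^ 2 / lam ^ 2 := sub_pos.mpr hMbig
  rw [div_mul_eq_mul_div, le_div_iff₀ hd]
  nlinarith [key]
end
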